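/- Let α ∈ (0,1) and λ := (1−α)/(2α). For any k, n ∈ ℕ with k ≥ 1, n ≥ 1, and any spherical {−1/λ, 0}-code C₀ in ℝ^k, there exists a spherical {−α, α}-code in ℝ^n of cardinality ⌊(n−1)/k⌋·|C₀|. Consequently, if the spectral radius order k(λ) is finite then N_α(n) ≥ ⌊(n−1)/(k(λ)−1)⌋·k(λ), and if k(λ) = ∞ then N_α(n) ≥ n. -/

import Mathlib

open scoped Classical

/-- The adjacency matrix (over `ℝ`) of a simple graph. -/
noncomputable def adjMat {V : Type*} [Fintype V] (G : SimpleGraph V) : Matrix V V ℝ :=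
  fun i j => if G.Adj i j then 1 else 0

/-- The spectral radius of a finite simple graph: the largest eigenvalue of its
adjacency matrix. -/
noncomputable def specRad {V : Type*} [Fintype V] (G : SimpleGraph V) : ℝ :=
  sSup {μ : ℝ | ∃ v : V → ℝ, v ≠ 0 ∧ (adjMat G).mulVec v = μ • v}

/-- `Contains G H` : the graph `H` contains a copy of `G` as a subgraph. -/
def Contains {V W : Type*} (G : SimpleGraph V) (H : SimpleGraph W) : Prop :=
  ∃ f : V → W, Function.Injective f ∧ ∀ ⦃a b⦄, G.Adj a b → H.Adj (f a) (f b)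

/-- `beta m` : the unique positive real root of `x^(m+1) = 1 + x + ⋯ + x^(m-1)`. -/
noncomputable def beta (m : ℕ) : ℝ :=
  sSup {x : ℝ | 0 < x ∧ x ^ (m + 1) = ∑ i ∈ Finset.range m, x ^ i}

/-- `alpha m = beta m ^ (1/2) + beta m ^ (-1/2)`. -/
noncomputable def alpha (m : ℕ) : ℝ :=
  Real.sqrt (beta m) + (Real.sqrt (beta m))⁻¹

/-- `λ* = √(2+√5)`. -/
noncomputable def lambdaStar : ℝ := Real.sqrt (2 + Real.sqrt 5)

/-- A spherical `L`-code in `ℝ^n`: a finite set of unit vectors whose pairwise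
inner products lie in `L`. -/
def SphericalCode (n : ℕ) (L : Set ℝ) (C : Finset (EuclideanSpace ℝ (Fin n))) : Prop :=
  (∀ v ∈ C, ‖v‖ = 1) ∧
  ∀ v ∈ C, ∀ w ∈ C, v ≠ w → (inner ℝ v w : ℝ) ∈ L

/-- `Nmax a n` : the maximum cardinality of a spherical `{-a, a}`-code in `ℝ^n`,
i.e. the maximum number of equiangular lines in `ℝ^n` with angle `arccos a`. -/
noncomputable def Nmax (a : ℝ) (n : ℕ) : ℕ :=
  sSup {k : ℕ | ∃ C : Finset (EuclideanSpace ℝ (Fin n)),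
    SphericalCode n {-a, a} C ∧ C.card = k}

/-- The spectral radius order of `l` : the smallest number of vertices of a finite
simple graph whose spectral radius is `l`; `⊤` if there is no such graph. -/
noncomputable def specOrder (l : ℝ) : ℕ∞ :=
  sInf ((fun k : ℕ => (k : ℕ∞)) '' {k : ℕ | ∃ G : SimpleGraph (Fin k), specRad G = l})

/-- The set `L(α, t)` from the paper. -/
noncomputable def Lset (a : ℝ) (t : ℕ) : Set ℝ :=
  { -(1 / ((1 - a) / (2 * a))) * (1 - 1 / ((t : ℝ) + a⁻¹)) + 1 / ((t : ℝ) + a⁻¹),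
    1 / ((t : ℝ) + a⁻¹) }

/-- The underlying graph of a spherical code: vertices are the code vectors, two
of them adjacent iff their inner product is negative. -/
def codeGraph {n : ℕ} (C : Finset (EuclideanSpace ℝ (Fin n))) :
    SimpleGraph {v // v ∈ C} :=
  SimpleGraph.fromRel (fun v w =>
    (inner ℝ (v : EuclideanSpace ℝ (Fin n)) (w : EuclideanSpace ℝ (Fin n)) : ℝ) < 0)

/-- `x` is a totally real algebraic integer: it is integral over `ℤ` and every
complex root of its minimal polynomial over `ℚ` is real. -/
def TotallyRealAlgInt (x : ℝ) : Prop :=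
  IsIntegral ℤ x ∧ ∀ z : ℂ, Polynomial.aeval z (minpoly ℚ x) = 0 → z.im = 0

/-!
Block construction: place a copy of the `{-1/λ, 0}`-code, scaled by `√(1 - α)`, in each of
`⌊(n-1)/k⌋` mutually orthogonal `k`-dimensional blocks and add `√α` times a unit vector orthogonal
to all blocks. Inner products become `α + (1 - α)⟪w, w'⟫ ∈ {-α, α}` inside a block and `α` across
blocks. If `G` has `k` vertices and `λ₁(G) = λ`, then `I - A/λ` is positive semidefinite and
singular, so it is the Gram matrix of `k` unit vectors in `ℝ^(k-1)` with inner products `-1/λ` on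
edges and `0` otherwise. If `k(λ) = ∞`, the Gram matrix `(1 - α)I + αJ` gives `n` equiangular
lines in `ℝ^n`. Finally `N_α(n)` is finite: the tensor squares `v ⊗ v` of a `{-α, α}`-code have
the positive definite Gram matrix `(1 - α²)I + α²J`, so there are at most `n²` of them.
-/

open Matrix

lemma Matrix.mem_spectrum_iff_exists_mulVec_eq_smul {K n : Type*} [Field K] [Fintype n]
    [DecidableEq n] (A : Matrix n n K) (μ : K) :
    μ ∈ spectrum K A ↔ ∃ v ≠ 0, A *ᵥ v = μ • v := by
  rw [← spectrum_toLin', ← Module.End.hasEigenvalue_iff_mem_spectrum]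
  constructor
  · intro h
    obtain ⟨v, hv⟩ := h.exists_hasEigenvector
    exact ⟨v, hv.2, by simpa using hv.apply_eq_smul⟩
  · rintro ⟨v, hv0, hv⟩
    exact Module.End.hasEigenvalue_of_hasEigenvector ⟨by simpa using hv, hv0⟩

section SpectralRadius

variable {V : Type*} [Fintype V] (G : SimpleGraph V)

lemma adjMat_isHermitian : (adjMat G).IsHermitian := by
  ext p q
  simp [adjMat, SimpleGraph.adj_comm]

lemma specRad_eq_sSup_spectrum : specRad G = sSup (spectrum ℝ (adjMat G)) := by
  simp only [specRad, ← Matrix.mem_spectrum_iff_exists_mulVec_eq_smul, Set.ofPred_mem_eq]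

lemma le_specRad {μ : ℝ} (hμ : μ ∈ spectrum ℝ (adjMat G)) : μ ≤ specRad G :=
  specRad_eq_sSup_spectrum G ▸ le_csSup (finite_real_spectrum).bddAbove hμ

lemma specRad_mem_spectrum [Nonempty V] : specRad G ∈ spectrum ℝ (adjMat G) := by
  rw [specRad_eq_sSup_spectrum]
  exact Set.Nonempty.csSup_mem
    ⟨_, (adjMat_isHermitian G).eigenvalues_mem_spectrum_real (Classical.arbitrary V)⟩
    finite_real_spectrum

lemma specRad_eq_zero_of_isEmpty [IsEmpty V] : specRad G = 0 := by
  simp [specRad, Subsingleton.elim _ (0 : V → ℝ)]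

end SpectralRadius

lemma Matrix.IsHermitian.apply_eq_sum_eigenvalues {ι : Type*} [Fintype ι] {M : Matrix ι ι ℝ}
    (hM : M.IsHermitian) (p q : ι) :
    M p q = ∑ i, hM.eigenvalues i * (hM.eigenvectorBasis i p * hM.eigenvectorBasis i q) := by
  conv_lhs => rw [hM.spectral_theorem, Unitary.conjStarAlgAut_apply, mul_apply]
  refine Finset.sum_congr rfl fun i _ => ?_
  simp only [RCLike.ofReal_real_eq_id, CompTriple.comp_eq, mul_diagonal,
    eigenvectorUnitary_apply, star_apply, star_trivial]
  ring

lemma exists_inner_eq_of_card_le {ι α : Type*} [Fintype α] {n : ℕ}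
    (x : ι → EuclideanSpace ℝ α) (h : Fintype.card α ≤ n) :
    ∃ y : ι → EuclideanSpace ℝ (Fin n), ∀ p q, inner ℝ (y p) (y q) = inner ℝ (x p) (x q) := by
  obtain ⟨f⟩ := Function.Embedding.nonempty_of_card_le (h.trans (Fintype.card_fin n).ge)
  have hu : Orthonormal ℝ (EuclideanSpace.basisFun (Fin n) ℝ ∘ f) :=
    (EuclideanSpace.basisFun (Fin n) ℝ).orthonormal.comp f f.injective
  refine ⟨fun p => ∑ s, x p s • (EuclideanSpace.basisFun (Fin n) ℝ ∘ f) s, fun p q => ?_⟩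
  rw [hu.inner_sum, PiLp.inner_apply]
  simp [mul_comm]

lemma exists_inner_eq_of_posSemidef {ι : Type*} [Fintype ι] {M : Matrix ι ι ℝ}
    (hM : M.PosSemidef) {d : ℕ} (hd : M.rank ≤ d) :
    ∃ x : ι → EuclideanSpace ℝ (Fin d), ∀ p q, inner ℝ (x p) (x q) = M p q := by
  set ν := hM.isHermitian.eigenvalues
  set b := hM.isHermitian.eigenvectorBasis
  let x₀ : ι → EuclideanSpace ℝ {i // ν i ≠ 0} := fun p =>
    WithLp.toLp 2 fun i => √(ν i) * b i p
  have hx₀ : ∀ p q, inner ℝ (x₀ p) (x₀ q) = M p q := by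
    intro p q
    rw [hM.isHermitian.apply_eq_sum_eigenvalues, PiLp.inner_apply,
      ← Finset.sum_filter_of_ne (p := fun i => ν i ≠ 0) fun i _ h => left_ne_zero_of_mul h,
      ← Finset.sum_subtype_eq_sum_filter, Finset.subtype_univ]
    refine Finset.sum_congr rfl fun i _ => ?_
    have hsq : √(ν i) * √(ν i) = ν i := Real.mul_self_sqrt (hM.eigenvalues_nonneg i)
    simp only [x₀, RCLike.inner_apply, conj_trivial]
    linear_combination (b i p * b i q) * hsq
  obtain ⟨x, hx⟩ := exists_inner_eq_of_card_le x₀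
    (hM.isHermitian.rank_eq_card_non_zero_eigs ▸ hd)
  exact ⟨x, fun p q => (hx p q).trans (hx₀ p q)⟩

lemma exists_sphericalCode_of_inner {ι : Type*} [Fintype ι] {n : ℕ} {L : Set ℝ}
    (x : ι → EuclideanSpace ℝ (Fin n)) (hself : ∀ p, inner ℝ (x p) (x p) = 1) (hL : 1 ∉ L)
    (hx : ∀ p q, p ≠ q → inner ℝ (x p) (x q) ∈ L) :
    ∃ C, SphericalCode n L C ∧ C.card = Fintype.card ι := by
  have hinj : Function.Injective x := by
    intro p q hpq
    by_contra hne
    exact hL (hself q ▸ hpq ▸ hx p q hne)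
  refine ⟨Finset.univ.image x, ⟨?_, ?_⟩, Finset.card_image_of_injective _ hinj⟩
  · simp only [Finset.forall_mem_image, Finset.mem_univ, forall_const]
    intro p
    rw [norm_eq_sqrt_real_inner, hself, Real.sqrt_one]
  · simp only [Finset.forall_mem_image, Finset.mem_univ, forall_const]
    exact fun p q hpq => hx p q (fun h => hpq (h ▸ rfl))

open TensorProduct in
lemma card_le_of_sphericalCode {n : ℕ} {a : ℝ} (ha : |a| < 1)
    {C : Finset (EuclideanSpace ℝ (Fin n))} (hC : SphericalCode n {-a, a} C) :
    C.card ≤ n * n := by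
  let f : C → EuclideanSpace ℝ (Fin n) ⊗[ℝ] EuclideanSpace ℝ (Fin n) := fun v => v.1 ⊗ₜ v.1
  have hsq : ∀ v w : C, inner ℝ (f v) (f w) = (1 - a ^ 2) * (1 : Matrix C C ℝ) v w + a ^ 2 := by
    intro v w
    rw [TensorProduct.inner_tmul, ← sq]
    by_cases hvw : v = w
    · subst hvw
      simp [hC.1 v.1 v.2]
    · have := hC.2 v.1 v.2 w.1 w.2 (Subtype.coe_ne_coe.mpr hvw)
      rcases this with h | h <;> simp_all
  have hgram : (gram ℝ f).PosDef := by
    have : gram ℝ f = (1 - a ^ 2) • (1 : Matrix C C ℝ) + a ^ 2 • vecMulVec 1 1 := by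
      ext v w
      simp [gram_apply, hsq]
    rw [this]
    have ha2 : 0 < 1 - a ^ 2 := by nlinarith [abs_nonneg a, sq_abs a]
    exact (PosDef.one.smul ha2).add_posSemidef
      ((posSemidef_vecMulVec_self_star 1).smul (sq_nonneg a))
  have := (linearIndependent_of_posDef_gram (𝕜 := ℝ) (v := f) hgram).fintype_card_le_finrank
  simpa [Module.finrank_tensorProduct] using this

lemma card_le_Nmax {n : ℕ} {a : ℝ} (ha : |a| < 1) {C : Finset (EuclideanSpace ℝ (Fin n))}
    (hC : SphericalCode n {-a, a} C) : C.card ≤ Nmax a n :=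
  le_csSup ⟨n * n, fun _ ⟨_, hD, hcard⟩ => hcard ▸ card_le_of_sphericalCode ha hD⟩ ⟨C, hC, rfl⟩

/-- Coordinate `none` carries the common direction, `some (j, i)` coordinate `i` of block `j`. -/
noncomputable def blockLift {ι : Type*} {k : ℕ} (a : ℝ) (j : ι) (w : EuclideanSpace ℝ (Fin k)) :
    EuclideanSpace ℝ (Option (ι × Fin k)) :=
  WithLp.toLp 2 fun o => o.elim √a fun ji => if ji.1 = j then √(1 - a) * w ji.2 else 0

lemma inner_blockLift {ι : Type*} [Fintype ι] {k : ℕ} {a : ℝ} (ha : a ∈ Set.Icc (0 : ℝ) 1)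
    (j j' : ι) (w w' : EuclideanSpace ℝ (Fin k)) :
    inner ℝ (blockLift a j w) (blockLift a j' w') =
      a + if j = j' then (1 - a) * inner ℝ w w' else 0 := by
  have hsa : √a * √a = a := Real.mul_self_sqrt ha.1
  have hsb : √(1 - a) * √(1 - a) = 1 - a := Real.mul_self_sqrt (by linarith [ha.2])
  simp only [PiLp.inner_apply, Fintype.sum_option, Fintype.sum_prod_type, blockLift,
    Option.elim, RCLike.inner_apply, conj_trivial, hsa]
  congr 1
  by_cases hjj : j = j'
  · subst hjj
    simp only [mul_ite, ite_mul, zero_mul, mul_zero, Finset.sum_ite_irrel, Finset.sum_const_zero,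
      Finset.sum_ite_eq', Finset.mem_univ, if_true, Finset.mul_sum]
    refine Finset.sum_congr rfl fun i _ => ?_
    linear_combination (w i * w' i) * hsb
  · simp [hjj, ite_mul, mul_ite, Finset.sum_ite_eq']

lemma exists_sphericalCode_card_eq_mul {a : ℝ} (ha : a ∈ Set.Ioo (0 : ℝ) 1) {k n : ℕ}
    (hn : 1 ≤ n) {C0 : Finset (EuclideanSpace ℝ (Fin k))}
    (hC0 : SphericalCode k {-(((1 - a) / (2 * a))⁻¹), 0} C0) :
    ∃ C : Finset (EuclideanSpace ℝ (Fin n)),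
      SphericalCode n {-a, a} C ∧ C.card = ((n - 1) / k) * C0.card := by
  obtain ⟨ha0, ha1⟩ := ha
  set m := (n - 1) / k
  have hcard : Fintype.card (Option (Fin m × Fin k)) ≤ n := by
    simp only [Fintype.card_option, Fintype.card_prod, Fintype.card_fin]
    have : m * k ≤ n - 1 := Nat.div_mul_le_self (n - 1) k
    omega
  obtain ⟨x, hx⟩ := exists_inner_eq_of_card_le
    (fun jw : Fin m × C0 => blockLift a jw.1 (jw.2 : EuclideanSpace ℝ (Fin k))) hcard
  have hinner := fun p q => (hx p q).trans (inner_blockLift ⟨ha0.le, ha1.le⟩ _ _ _ _)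
  have hinv : ((1 - a) / (2 * a))⁻¹ = 2 * a / (1 - a) := inv_div _ _
  have hself : ∀ p, inner ℝ (x p) (x p) = 1 := fun p => by
    rw [hinner, if_pos rfl, real_inner_self_eq_norm_sq, hC0.1 _ p.2.2]
    ring
  have hone : (1 : ℝ) ∉ ({-a, a} : Set ℝ) := by
    simp only [Set.mem_insert_iff, Set.mem_singleton_iff]
    rintro (h | h) <;> linarith
  have hoff : ∀ p q, p ≠ q → inner ℝ (x p) (x q) ∈ ({-a, a} : Set ℝ) := by
    rintro ⟨j, w⟩ ⟨j', w'⟩ hne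
    rw [hinner]
    by_cases hjj : j = j'
    · subst hjj
      have hww : (w : EuclideanSpace ℝ (Fin k)) ≠ w' := fun h => hne (by rw [Subtype.ext h])
      rcases hC0.2 w w.2 w' w'.2 hww with h | h
      · left
        rw [if_pos rfl, h, hinv]
        field_simp
        ring
      · right
        simp_all
    · right
      simp [hjj]
  obtain ⟨C, hC, hCcard⟩ := exists_sphericalCode_of_inner x hself hone hoff
  exact ⟨C, hC, by simp [hCcard]⟩

section SpectralCode

variable {n : Type*} [Fintype n] {A : Matrix n n ℝ} {l : ℝ}

lemma one_sub_inv_smul_mulVec (v : n → ℝ) :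
    (1 - l⁻¹ • A) *ᵥ v = v - l⁻¹ • (A *ᵥ v) := by
  rw [sub_mulVec, one_mulVec, smul_mulVec]

lemma posSemidef_one_sub_inv_smul (hA : A.IsHermitian) (hl : 0 < l)
    (hspec : ∀ μ ∈ spectrum ℝ A, μ ≤ l) : (1 - l⁻¹ • A).PosSemidef := by
  refine posSemidef_iff_isHermitian_and_spectrum_nonneg.mpr
    ⟨isHermitian_one.sub (hA.smul (IsSelfAdjoint.all _)), fun μ hμ => ?_⟩
  obtain ⟨v, hv0, hv⟩ := (mem_spectrum_iff_exists_mulVec_eq_smul _ μ).mp hμ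
  have hAv : A *ᵥ v = (l - l * μ) • v := by
    rw [one_sub_inv_smul_mulVec] at hv
    have := congrArg (l • ·) hv
    simp only [smul_sub, smul_smul, mul_inv_cancel₀ hl.ne', one_smul] at this
    rw [sub_smul, ← this]
    abel
  have := hspec _ ((mem_spectrum_iff_exists_mulVec_eq_smul _ _).mpr ⟨v, hv0, hAv⟩)
  show 0 ≤ μ
  nlinarith

lemma rank_one_sub_inv_smul_lt (hA : A.IsHermitian) (hl : l ≠ 0) (hmem : l ∈ spectrum ℝ A) :
    (1 - l⁻¹ • A).rank < Fintype.card n := by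
  have hM : (1 - l⁻¹ • A).IsHermitian := isHermitian_one.sub (hA.smul (IsSelfAdjoint.all _))
  obtain ⟨u, hu0, hu⟩ := (mem_spectrum_iff_exists_mulVec_eq_smul _ l).mp hmem
  have hzero : (0 : ℝ) ∈ spectrum ℝ (1 - l⁻¹ • A) :=
    (mem_spectrum_iff_exists_mulVec_eq_smul _ 0).mpr
      ⟨u, hu0, by rw [one_sub_inv_smul_mulVec, hu, smul_smul, inv_mul_cancel₀ hl]; simp⟩
  obtain ⟨i, hi⟩ := hM.spectrum_real_eq_range_eigenvalues ▸ hzero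
  rw [hM.rank_eq_card_non_zero_eigs]
  exact Fintype.card_subtype_lt (x := i) (by simp [hi])

end SpectralCode

lemma exists_sphericalCode_of_specRad {V : Type*} [Fintype V] (G : SimpleGraph V)
    (hG : 0 < specRad G) :
    ∃ C0 : Finset (EuclideanSpace ℝ (Fin (Fintype.card V - 1))),
      SphericalCode _ {-(specRad G)⁻¹, 0} C0 ∧ C0.card = Fintype.card V := by
  have : Nonempty V := not_isEmpty_iff.mp fun _ => hG.ne' (specRad_eq_zero_of_isEmpty G)
  set l := specRad G
  have hA := adjMat_isHermitian G
  have hM := posSemidef_one_sub_inv_smul hA hG fun μ => le_specRad G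
  have hrank := rank_one_sub_inv_smul_lt hA hG.ne' (specRad_mem_spectrum G)
  obtain ⟨x, hx⟩ := exists_inner_eq_of_posSemidef hM (Nat.le_sub_one_of_lt hrank)
  have hself : ∀ p, inner ℝ (x p) (x p) = 1 := fun p => by rw [hx]; simp [adjMat]
  have hone : (1 : ℝ) ∉ ({-l⁻¹, 0} : Set ℝ) := by
    have : 0 < l⁻¹ := inv_pos.mpr hG
    simp only [Set.mem_insert_iff, Set.mem_singleton_iff]
    rintro (h | h) <;> linarith
  have hoff : ∀ p q, p ≠ q → inner ℝ (x p) (x q) ∈ ({-l⁻¹, 0} : Set ℝ) := by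
    intro p q hpq
    by_cases hadj : G.Adj p q <;> simp [hx, adjMat, hpq, hadj]
  exact exists_sphericalCode_of_inner x hself hone hoff

lemma exists_sphericalCode_card_eq {a : ℝ} (ha : a ∈ Set.Ioo (0 : ℝ) 1) (n : ℕ) :
    ∃ C : Finset (EuclideanSpace ℝ (Fin n)), SphericalCode n {-a, a} C ∧ C.card = n := by
  obtain ⟨ha0, ha1⟩ := ha
  have hM : ((1 - a) • (1 : Matrix (Fin n) (Fin n) ℝ) + a • vecMulVec 1 1).PosSemidef :=
    (PosSemidef.one.smul (by linarith)).add ((posSemidef_vecMulVec_self_star 1).smul ha0.le)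
  obtain ⟨x, hx⟩ :=
    exists_inner_eq_of_posSemidef hM ((rank_le_card_width _).trans_eq (Fintype.card_fin n))
  have hself : ∀ p, inner ℝ (x p) (x p) = 1 := fun p => by rw [hx]; simp
  have hone : (1 : ℝ) ∉ ({-a, a} : Set ℝ) := by
    simp only [Set.mem_insert_iff, Set.mem_singleton_iff]
    rintro (h | h) <;> linarith
  have hoff : ∀ p q, p ≠ q → inner ℝ (x p) (x q) ∈ ({-a, a} : Set ℝ) := fun p q hpq => by
    rw [hx]; simp [hpq]
  simpa using exists_sphericalCode_of_inner x hself hone hoff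

lemma exists_specRad_eq_of_specOrder_eq {l : ℝ} {k : ℕ} (h : specOrder l = k) :
    ∃ G : SimpleGraph (Fin k), specRad G = l := by
  unfold specOrder at h
  set S := {k : ℕ | ∃ G : SimpleGraph (Fin k), specRad G = l}
  have hne : ((fun k : ℕ => (k : ℕ∞)) '' S).Nonempty := by
    by_contra hemp
    rw [Set.not_nonempty_iff_eq_empty.mp hemp, sInf_empty] at h
    exact ENat.top_ne_natCast k h
  obtain ⟨j, hj, hjk⟩ := h ▸ csInf_mem hne
  exact (Nat.cast_injective hjk : j = k) ▸ hj

theorem stmt9 (a : ℝ) (ha : a ∈ Set.Ioo (0 : ℝ) 1) :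
    (∀ k n : ℕ, 1 ≤ k → 1 ≤ n →
      ∀ C0 : Finset (EuclideanSpace ℝ (Fin k)),
        SphericalCode k {-(((1 - a) / (2 * a))⁻¹), 0} C0 →
        ∃ C : Finset (EuclideanSpace ℝ (Fin n)),
          SphericalCode n {-a, a} C ∧ C.card = ((n - 1) / k) * C0.card) ∧
    (∀ k : ℕ, specOrder ((1 - a) / (2 * a)) = (k : ℕ∞) →
      ∀ n : ℕ, 1 ≤ n → ((n - 1) / (k - 1)) * k ≤ Nmax a n) ∧
    (specOrder ((1 - a) / (2 * a)) = ⊤ → ∀ n : ℕ, 1 ≤ n → n ≤ Nmax a n) := by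
  have habs : |a| < 1 := abs_lt.mpr ⟨by linarith [ha.1], ha.2⟩
  refine ⟨fun k n _ hn C0 hC0 => exists_sphericalCode_card_eq_mul ha hn hC0, ?_, ?_⟩
  · intro k hk n hn
    obtain ⟨G, hG⟩ := exists_specRad_eq_of_specOrder_eq hk
    have hpos : 0 < specRad G := hG ▸ div_pos (by linarith [ha.2]) (by linarith [ha.1])
    obtain ⟨C0, hC0, hC0card⟩ := exists_sphericalCode_of_specRad G hpos
    rw [hG] at hC0
    obtain ⟨C, hC, hCcard⟩ := exists_sphericalCode_card_eq_mul ha hn hC0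
    simp only [hC0card, Fintype.card_fin] at hCcard
    exact hCcard.symm.le.trans (card_le_Nmax habs hC)
  · intro _ n _
    obtain ⟨C, hC, hCcard⟩ := exists_sphericalCode_card_eq ha n
    exact hCcard.symm.le.trans (card_le_Nmax habs hC)
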